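/- Let I be a nonzero ideal of k[x_1,...,x_n]. The set {in_<(I) : < a term ordering} of initial ideals of I is finite. -/

import Mathlib

open MvPolynomial

/-- A term ordering on the monomials (exponent vectors) of `k[x_1, …, x_n]`:
a strict total well-ordering compatible with addition of exponents. -/
structure TermOrder (n : ℕ) where
  lt : (Fin n →₀ ℕ) → (Fin n →₀ ℕ) → Prop
  irrefl : ∀ a, ¬ lt a a
  trans : ∀ a b c, lt a b → lt b c → lt a c
  trichotomous : ∀ a b, lt a b ∨ a = b ∨ lt b a
  wf : WellFounded lt
  add_right : ∀ a b c, lt a b → lt (a + c) (b + c)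

variable {n : ℕ}

/-- `α` is the exponent vector of the `t`-leading term of `f`. -/
def TermOrder.IsLeadExp {k : Type*} [CommSemiring k] (t : TermOrder n)
    (f : MvPolynomial (Fin n) k) (α : Fin n →₀ ℕ) : Prop :=
  α ∈ f.support ∧ ∀ β ∈ f.support, β ≠ α → t.lt β α

open Classical in
/-- The exponent vector of the `t`-leading term of `f` (junk value `0` if none exists). -/
noncomputable def TermOrder.leadExp {k : Type*} [CommSemiring k] (t : TermOrder n)
    (f : MvPolynomial (Fin n) k) : Fin n →₀ ℕ :=
  if h : ∃ α, t.IsLeadExp f α then h.choose else 0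

/-- The leading term `in_t(f)` of `f` with respect to the term ordering `t`. -/
noncomputable def TermOrder.leadTerm {k : Type*} [CommSemiring k] (t : TermOrder n)
    (f : MvPolynomial (Fin n) k) : MvPolynomial (Fin n) k :=
  monomial (t.leadExp f) (coeff (t.leadExp f) f)

/-- The initial ideal `in_t(I)` of `I` with respect to the term ordering `t`. -/
noncomputable def initialIdealT {k : Type*} [CommSemiring k] (t : TermOrder n)
    (I : Ideal (MvPolynomial (Fin n) k)) : Ideal (MvPolynomial (Fin n) k) :=
  Ideal.span { p | ∃ f ∈ I, f ≠ 0 ∧ p = t.leadTerm f }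

/-- The `ω`-weight `⟨ω, α⟩` of an exponent vector `α`. -/
noncomputable def wt (ω : Fin n → ℝ) (α : Fin n →₀ ℕ) : ℝ :=
  ∑ i, ω i * (α i : ℝ)

/-- The initial form `in_ω(f)`: the sum of the terms of `f` of maximal `ω`-weight. -/
noncomputable def initialForm {k : Type*} [CommSemiring k] (ω : Fin n → ℝ)
    (f : MvPolynomial (Fin n) k) : MvPolynomial (Fin n) k :=
  ∑ α ∈ f.support.filter (fun α => ∀ β ∈ f.support, wt ω β ≤ wt ω α),
    monomial α (coeff α f)

/-- The generalized initial ideal `in_ω(I)` of `I` with respect to the weight vector `ω`. -/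
noncomputable def initialIdealW {k : Type*} [CommSemiring k] (ω : Fin n → ℝ)
    (I : Ideal (MvPolynomial (Fin n) k)) : Ideal (MvPolynomial (Fin n) k) :=
  Ideal.span { p | ∃ f ∈ I, f ≠ 0 ∧ p = initialForm ω f }

/-- The refinement `<_ω` of the weight vector `ω` by the term ordering `t`:
compare first by `ω`-weight, break ties with `t`. -/
def refineLt (ω : Fin n → ℝ) (t : TermOrder n) (α β : Fin n →₀ ℕ) : Prop :=
  wt ω α < wt ω β ∨ (wt ω α = wt ω β ∧ t.lt α β)

/-- `G` is a Gröbner basis of `I` w.r.t. `t`: `G ⊆ I` and the leading terms of the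
elements of `G` generate the initial ideal `in_t(I)`. -/
def IsGroebnerBasis {k : Type*} [CommSemiring k] (t : TermOrder n)
    (I : Ideal (MvPolynomial (Fin n) k)) (G : Finset (MvPolynomial (Fin n) k)) : Prop :=
  (∀ g ∈ G, g ∈ I) ∧
    Ideal.span ((fun g => t.leadTerm g) '' (G : Set (MvPolynomial (Fin n) k)))
      = initialIdealT t I

open Classical in
/-- `G` is the reduced (marked) Gröbner basis of `I` w.r.t. `t`:
a Gröbner basis that is minimal, monic and reduced. -/
def IsReducedGB {k : Type*} [CommSemiring k] (t : TermOrder n)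
    (I : Ideal (MvPolynomial (Fin n) k)) (G : Finset (MvPolynomial (Fin n) k)) : Prop :=
  IsGroebnerBasis t I G ∧
  (∀ g ∈ G, coeff (t.leadExp g) g = 1) ∧
  (∀ g ∈ G, ∀ g' ∈ G, g ≠ g' → ∀ α ∈ g.support, ¬ t.leadExp g' ≤ α) ∧
  (∀ g ∈ G, ¬ IsGroebnerBasis t I (G.erase g))


/-! If `I` had infinitely many initial ideals, one could build a strictly increasing chain of
monomial ideals `M`, contradicting Hilbert's basis theorem. Each `M` is generated by the leading
monomials of some `F ⊆ I` that are the same for every term order of a family `T` still yielding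
infinitely many initial ideals. Some `t₀ ∈ T` has `in_{t₀}(I) ≠ M`, so dividing by `F` with
respect to `t₀` leaves a nonzero `r ∈ I` with no term in `M`. As `r` has finitely many terms, its
leading exponent `m` is the same on a subfamily still yielding infinitely many initial ideals, and
adjoining `r` to `F` enlarges `M` by `x^m`. -/

namespace TermOrder

instance isWellOrder (t : TermOrder n) : IsWellOrder (Fin n →₀ ℕ) t.lt where
  wf := t.wf
  trichotomous a b hab hba := (t.trichotomous a b).resolve_left hab |>.resolve_right hba

variable (t : TermOrder n)

theorem exists_max (s : Finset (Fin n →₀ ℕ)) (hs : s.Nonempty) :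
    ∃ β ∈ s, ∀ γ ∈ s, γ ≠ β → t.lt γ β := by
  have := hs.to_subtype
  obtain ⟨⟨β, hβ⟩, -, hmax⟩ :=
    (s.finite_toSet.wellFoundedOn (r := Function.swap t.lt)).has_min Set.univ Set.univ_nonempty
  refine ⟨β, hβ, fun γ hγ hne => ?_⟩
  rcases trichotomous_of t.lt γ β with h | rfl | h
  · exact h
  · exact absurd rfl hne
  · exact absurd h (hmax ⟨γ, hγ⟩ trivial)

section CommSemiring

variable {k : Type*} [CommSemiring k] (F : Set (MvPolynomial (Fin n) k))

theorem isLeadExp_leadExp {f : MvPolynomial (Fin n) k} (hf : f ≠ 0) :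
    t.IsLeadExp f (t.leadExp f) := by
  have hex : ∃ α, t.IsLeadExp f α := t.exists_max f.support (support_nonempty.2 hf)
  rw [leadExp, dif_pos hex]
  exact hex.choose_spec

theorem eq_or_lt_of_mem_support_monomial_mul {g : MvPolynomial (Fin n) k} {α γ δ : Fin n →₀ ℕ}
    {a : k} (hg : t.IsLeadExp g γ) (hα : α ∈ (monomial δ a * g).support) :
    α = δ + γ ∨ t.lt α (δ + γ) := by
  classical
  rw [mem_support_iff, coeff_monomial_mul'] at hα
  split_ifs at hα with hδ
  · obtain ⟨α', rfl⟩ := le_iff_exists_add.1 hδ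
    rw [add_tsub_cancel_left] at hα
    have hα' : α' ∈ g.support := mem_support_iff.2 (right_ne_zero_of_mul hα)
    by_cases h : α' = γ
    · exact .inl (h ▸ rfl)
    · right
      simpa only [add_comm δ] using t.add_right _ _ δ (hg.2 α' hα' h)
  · exact absurd rfl hα

def IsReducible (α : Fin n →₀ ℕ) : Prop :=
  ∃ g ∈ F, t.leadExp g ≤ α

noncomputable def leadMonomialIdeal : Ideal (MvPolynomial (Fin n) k) :=
  Ideal.span ((fun s => monomial s (1 : k)) '' (t.leadExp '' F))

variable {t F}

theorem mem_leadMonomialIdeal {p : MvPolynomial (Fin n) k} :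
    p ∈ t.leadMonomialIdeal F ↔ ∀ α ∈ p.support, t.IsReducible F α := by
  simp only [leadMonomialIdeal, mem_ideal_span_monomial_image, Set.exists_mem_image, IsReducible]

theorem monomial_mem_leadMonomialIdeal {α : Fin n →₀ ℕ} {a : k} (ha : a ≠ 0) :
    monomial α a ∈ t.leadMonomialIdeal F ↔ t.IsReducible F α := by
  classical
  simp [mem_leadMonomialIdeal, support_monomial, ha]

end CommSemiring

section Division

variable {k : Type*} [Field k] (F : Set (MvPolynomial (Fin n) k))

/-- The last condition ensures `r ≠ 0` whenever the leading term of `f` is not reducible. -/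
def IsRemainder (f r : MvPolynomial (Fin n) k) : Prop :=
  f - r ∈ Ideal.span F ∧ (∀ α ∈ r.support, ¬ t.IsReducible F α) ∧
    ∀ α, (∀ β ∈ f.support, t.IsReducible F β → t.lt β α) → coeff α r = coeff α f

variable {t F} {f : MvPolynomial (Fin n) k} {β : Fin n →₀ ℕ}

theorem isRemainder_self (hf : ∀ α ∈ f.support, ¬ t.IsReducible F α) : t.IsRemainder F f f :=
  ⟨by simp, hf, fun _ _ => rfl⟩

theorem exists_sub_mem_span_singleton_coeff_eq_zero {g : MvPolynomial (Fin n) k}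
    {γ : Fin n →₀ ℕ} (hg : t.IsLeadExp g γ) (hγβ : γ ≤ β) (f : MvPolynomial (Fin n) k) :
    ∃ f', f - f' ∈ Ideal.span {g} ∧ coeff β f' = 0 ∧
      ∀ α, coeff α f' ≠ coeff α f → α = β ∨ t.lt α β := by
  obtain ⟨δ, rfl⟩ := le_iff_exists_add.1 hγβ
  have hγ : coeff γ g ≠ 0 := mem_support_iff.1 hg.1
  set h := monomial δ (coeff (γ + δ) f / coeff γ g) * g
  refine ⟨f - h, by simpa using Ideal.mul_mem_left _ _ (Ideal.mem_span_singleton_self g), ?_, ?_⟩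
  · rw [coeff_sub, add_comm γ, coeff_monomial_mul, div_mul_cancel₀ _ hγ, add_comm, sub_self]
  · intro α hα
    have hαh : α ∈ h.support := mem_support_iff.2 fun h0 => hα (by rw [coeff_sub, h0, sub_zero])
    rw [add_comm γ]
    exact eq_or_lt_of_mem_support_monomial_mul t hg hαh

theorem exists_reduction_step (hF : 0 ∉ F) (hβ : t.IsReducible F β)
    (hmax : ∀ α ∈ f.support, t.IsReducible F α → α ≠ β → t.lt α β) :
    ∃ f', f - f' ∈ Ideal.span F ∧ (∀ α ∈ f'.support, t.IsReducible F α → t.lt α β) ∧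
      ∀ α, t.lt β α → coeff α f' = coeff α f := by
  obtain ⟨g, hgF, hgβ⟩ := hβ
  obtain ⟨f', hsub, hβ0, hchange⟩ := exists_sub_mem_span_singleton_coeff_eq_zero
    (t.isLeadExp_leadExp (ne_of_mem_of_not_mem hgF hF)) hgβ f
  refine ⟨f', Ideal.span_mono (Set.singleton_subset_iff.2 hgF) hsub, fun α hα hred => ?_,
    fun α hα => ?_⟩
  · have hαβ : α ≠ β := by
      rintro rfl
      exact mem_support_iff.1 hα hβ0
    by_cases hc : coeff α f' = coeff α f
    · exact hmax α (mem_support_iff.2 (hc ▸ mem_support_iff.1 hα)) hred hαβ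
    · exact (hchange α hc).resolve_left hαβ
  · by_contra hc
    rcases hchange α hc with rfl | h
    · exact irrefl_of t.lt _ hα
    · exact asymm h hα

theorem IsRemainder.of_reduction_step {f' r : MvPolynomial (Fin n) k} (hr : t.IsRemainder F f' r)
    (hsub : f - f' ∈ Ideal.span F) (hlt : ∀ α ∈ f'.support, t.IsReducible F α → t.lt α β)
    (hagree : ∀ α, t.lt β α → coeff α f' = coeff α f) (hβ : β ∈ f.support)
    (hβred : t.IsReducible F β) : t.IsRemainder F f r := by
  refine ⟨by simpa using add_mem hsub hr.1, hr.2.1, fun α hα => ?_⟩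
  have hβα := hα β hβ hβred
  exact (hr.2.2 α fun γ hγ hred => _root_.trans (hlt γ hγ hred) hβα).trans (hagree α hβα)

theorem exists_max_reducible (h : ∀ r, ¬ t.IsRemainder F f r) :
    ∃ β ∈ f.support, t.IsReducible F β ∧
      ∀ α ∈ f.support, t.IsReducible F α → α ≠ β → t.lt α β := by
  classical
  have hne : (f.support.filter (t.IsReducible F)).Nonempty := by
    refine Finset.nonempty_iff_ne_empty.2 fun hempty => h f (isRemainder_self fun α hα hred => ?_)
    exact Finset.notMem_empty α (hempty ▸ Finset.mem_filter.2 ⟨hα, hred⟩)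
  obtain ⟨β, hβ, hmax⟩ := t.exists_max _ hne
  rw [Finset.mem_filter] at hβ
  exact ⟨β, hβ.1, hβ.2, fun α hα hred => hmax α (Finset.mem_filter.2 ⟨hα, hred⟩)⟩

variable (t) in
/-- Division by `F`, always cancelling the `t`-greatest reducible term: this greatest term
strictly decreases, so a counterexample minimising it cannot exist. -/
theorem exists_isRemainder (hF : 0 ∉ F) (f : MvPolynomial (Fin n) k) :
    ∃ r, t.IsRemainder F f r := by
  by_contra! hf
  obtain ⟨β, ⟨f, hbad, hβ, hβred, hmax⟩, hmin⟩ := t.wf.has_min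
    {β | ∃ f, (∀ r, ¬ t.IsRemainder F f r) ∧ β ∈ f.support ∧ t.IsReducible F β ∧
      ∀ α ∈ f.support, t.IsReducible F α → α ≠ β → t.lt α β}
    (let ⟨β, hβ⟩ := exists_max_reducible hf; ⟨β, f, hf, hβ⟩)
  obtain ⟨f', hsub, hlt, hagree⟩ := exists_reduction_step hF hβred hmax
  have hbad' : ∀ r, ¬ t.IsRemainder F f' r := fun r hr =>
    hbad r (hr.of_reduction_step hsub hlt hagree hβ hβred)
  obtain ⟨β', hβ', hβ'red, hmax'⟩ := exists_max_reducible hbad'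
  exact hmin β' ⟨f', hbad', hβ', hβ'red, hmax'⟩ (hlt β' hβ' hβ'red)

end Division

end TermOrder

theorem Set.Infinite.exists_infinite_image_fiber {ι α β : Type*} {T : Set ι} {φ : ι → α}
    (hT : (φ '' T).Infinite) {ψ : ι → β} {s : Set β} (hs : s.Finite)
    (hψ : ∀ i ∈ T, ψ i ∈ s) : ∃ b ∈ s, (φ '' {i ∈ T | ψ i = b}).Infinite := by
  by_contra! h
  refine hT ((hs.biUnion h).subset ?_)
  rintro _ ⟨i, hi, rfl⟩
  exact Set.mem_biUnion (hψ i hi) ⟨i, ⟨hi, rfl⟩, rfl⟩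

section InitialIdeal

variable {k : Type*} [Field k] {t : TermOrder n} {I : Ideal (MvPolynomial (Fin n) k)}
  {F : Set (MvPolynomial (Fin n) k)}

theorem leadTerm_mem_initialIdealT {f : MvPolynomial (Fin n) k} (hf : f ∈ I) (hf0 : f ≠ 0) :
    t.leadTerm f ∈ initialIdealT t I :=
  Ideal.subset_span ⟨f, hf, hf0, rfl⟩

theorem leadMonomialIdeal_le_initialIdealT (hFI : F ⊆ I) (hF : 0 ∉ F) :
    t.leadMonomialIdeal F ≤ initialIdealT t I := by
  refine Ideal.span_le.2 ?_
  rintro _ ⟨_, ⟨g, hg, rfl⟩, rfl⟩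
  have hg0 : g ≠ 0 := ne_of_mem_of_not_mem hg hF
  have hc : coeff (t.leadExp g) g ≠ 0 := mem_support_iff.1 (t.isLeadExp_leadExp hg0).1
  have hunit : monomial (t.leadExp g) (1 : k) = C (coeff (t.leadExp g) g)⁻¹ * t.leadTerm g := by
    rw [TermOrder.leadTerm, C_mul_monomial, inv_mul_cancel₀ hc]
  change monomial (t.leadExp g) (1 : k) ∈ initialIdealT t I
  rw [hunit]
  exact Ideal.mul_mem_left _ _ (leadTerm_mem_initialIdealT (hFI hg) hg0)

/-- Obtained by dividing by `F` an element of `I` whose leading term is not reducible. -/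
theorem exists_mem_ne_zero_forall_not_isReducible (hFI : F ⊆ I) (hF : 0 ∉ F)
    (hne : t.leadMonomialIdeal F ≠ initialIdealT t I) :
    ∃ r ∈ I, r ≠ 0 ∧ ∀ α ∈ r.support, ¬ t.IsReducible F α := by
  obtain ⟨f, hfI, hf0, hfM⟩ : ∃ f ∈ I, f ≠ 0 ∧ t.leadTerm f ∉ t.leadMonomialIdeal F := by
    by_contra! h
    refine hne (le_antisymm (leadMonomialIdeal_le_initialIdealT hFI hF) (Ideal.span_le.2 ?_))
    rintro _ ⟨f, hfI, hf0, rfl⟩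
    exact h f hfI hf0
  have hlead := t.isLeadExp_leadExp hf0
  have hc : coeff (t.leadExp f) f ≠ 0 := mem_support_iff.1 hlead.1
  have hirred : ¬ t.IsReducible F (t.leadExp f) := by
    rwa [TermOrder.leadTerm, TermOrder.monomial_mem_leadMonomialIdeal hc] at hfM
  obtain ⟨r, hsub, hred, hagree⟩ := t.exists_isRemainder hF f
  refine ⟨r, ?_, fun hr0 => hc ?_, hred⟩
  · simpa using I.sub_mem hfI (Ideal.span_le.2 hFI hsub)
  · rw [← hagree _ fun β hβ hβred => hlead.2 β hβ (by rintro rfl; exact hirred hβred), hr0,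
      coeff_zero]

def IsCommonLeadMonomialIdeal (I M : Ideal (MvPolynomial (Fin n) k)) : Prop :=
  ∃ (T : Set (TermOrder n)) (F : Set (MvPolynomial (Fin n) k)),
    ((initialIdealT · I) '' T).Infinite ∧ F ⊆ I ∧ 0 ∉ F ∧ ∀ t ∈ T, t.leadMonomialIdeal F = M

theorem IsCommonLeadMonomialIdeal.exists_gt {M : Ideal (MvPolynomial (Fin n) k)}
    (h : IsCommonLeadMonomialIdeal I M) : ∃ M', IsCommonLeadMonomialIdeal I M' ∧ M < M' := by
  obtain ⟨T, F, hT, hFI, hF0, hM⟩ := h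
  obtain ⟨_, ⟨t₀, ht₀, rfl⟩, hne⟩ := (hT.sdiff (Set.finite_singleton M)).nonempty
  obtain ⟨r, hrI, hr0, hred⟩ :=
    exists_mem_ne_zero_forall_not_isReducible hFI hF0 ((hM t₀ ht₀).trans_ne (Ne.symm hne))
  obtain ⟨m, hm, hT'⟩ := hT.exists_infinite_image_fiber (ψ := fun t => t.leadExp r)
    r.support.finite_toSet fun t _ => (t.isLeadExp_leadExp hr0).1
  refine ⟨M ⊔ Ideal.span {monomial m 1}, ⟨_, insert r F, hT', Set.insert_subset hrI hFI,
    by simp [Ne.symm hr0, hF0], ?_⟩, ?_⟩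
  · rintro t ⟨ht, rfl⟩
    rw [TermOrder.leadMonomialIdeal, Set.image_insert_eq, Set.image_insert_eq, Ideal.span_insert,
      ← TermOrder.leadMonomialIdeal, hM t ht, sup_comm]
  · rw [left_lt_sup, Ideal.span_singleton_le_iff_mem, ← hM t₀ ht₀,
      TermOrder.monomial_mem_leadMonomialIdeal one_ne_zero]
    exact hred m hm

end InitialIdeal

theorem initial_ideals_finite_general {k : Type*} [Field k]
    (I : Ideal (MvPolynomial (Fin n) k)) :
    {J : Ideal (MvPolynomial (Fin n) k) |
        ∃ t : TermOrder n, J = initialIdealT t I}.Finite := by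
  by_contra hfin
  have hbot : IsCommonLeadMonomialIdeal I ⊥ :=
    ⟨Set.univ, ∅, by simpa [Set.image_univ, Set.range, eq_comm] using hfin, by simp, by simp,
      fun t _ => by simp [TermOrder.leadMonomialIdeal]⟩
  obtain ⟨M, hM, hmax⟩ := wellFounded_gt.has_min {M | IsCommonLeadMonomialIdeal I M} ⟨⊥, hbot⟩
  obtain ⟨M', hM', hlt⟩ := hM.exists_gt
  exact hmax M' hM' hlt

/-- A nonzero ideal has only finitely many distinct initial ideals as the
term ordering varies. -/
theorem initial_ideals_finite {k : Type*} [Field k]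
    (I : Ideal (MvPolynomial (Fin n) k)) (hI : I ≠ ⊥) :
    {J : Ideal (MvPolynomial (Fin n) k) |
        ∃ t : TermOrder n, J = initialIdealT t I}.Finite :=
  initial_ideals_finite_general I
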